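/- arXiv:2605.25275 — 2 statements merged into one kernel-verified Lean document; each statement's English description precedes it below -/
import Mathlib

section
/- Let K ∈ ℝ^{n×n} be real symmetric positive semidefinite with eigenvalues λ₁, …, λ_n and orthonormal eigenvectors v₁, …, v_n, let r₀ ∈ ℝⁿ with L₀ := ½‖r₀‖² ≥ 1, and let constants c > δ > 0 satisfy (c − δ)λ_i ≤ (v_iᵀ r₀)² ≤ (c + δ)λ_i for all i ∈ [n]. Let ε ∈ (0,1) and η > 0 with η‖K‖_op ≤ 1. Suppose a sequence of residual vectors r_t ∈ ℝⁿ satisfies r_t = (I − ηK)^t r₀ + Δ_t with ‖Δ_t‖ ≤ ε/(4√L₀) for every integer t ≥ 0. Then for every t ≥ 0: (c − δ)/2 · tr[(I − ηK)^{2t} K] − ε/2 ≤ ½‖r_t‖² ≤ (c + δ)/2 · tr[(I − ηK)^{2t} K] + ε/2. -/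
/-!
Diagonalise `K` in the orthonormal eigenbasis `vᵢ`: the linearised residual `(I - ηK)ᵗ r₀` has
coordinates `(1 - ηλᵢ)ᵗ ⟨vᵢ, r₀⟩`, so its squared norm is `∑ᵢ (1 - ηλᵢ)²ᵗ ⟨vᵢ, r₀⟩²`, while
`tr[(I - ηK)²ᵗ K] = ∑ᵢ (1 - ηλᵢ)²ᵗ λᵢ`. The alignment condition compares these sums termwise.
Since `0 ≤ ηλᵢ ≤ η‖K‖ ≤ 1`, the weights `(1 - ηλᵢ)²ᵗ` lie in `[0, 1]`, so the linearised residual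
has squared norm at most `‖r₀‖² = 2L₀`; Cauchy–Schwarz then bounds the effect of the perturbation
`Δₜ` on `½‖rₜ‖²` by `√2 ε / 4 + ε² / 32 ≤ ε / 2`.
-/

open Matrix

noncomputable def enorm {n : ℕ} (x : Fin n → ℝ) : ℝ :=
  Real.sqrt (∑ i, x i ^ 2)

noncomputable def l2OpNorm {n m : ℕ} (A : Matrix (Fin n) (Fin m) ℝ) : ℝ :=
  ‖LinearMap.toContinuousLinearMap (Matrix.toEuclideanLin A)‖

namespace Matrix

theorem dotProduct_mulVec_of_isSymm {ι R : Type*} [Fintype ι] [CommSemiring R]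
    {B : Matrix ι ι R} (hB : B.IsSymm) {x : ι → R} {μ : R} (h : B *ᵥ x = μ • x) (y : ι → R) :
    x ⬝ᵥ B *ᵥ y = μ * (x ⬝ᵥ y) := by
  rw [dotProduct_mulVec, ← hB.eq, vecMul_transpose, h, smul_dotProduct, smul_eq_mul]

theorem pow_mulVec_eq_smul {ι R : Type*} [Fintype ι] [DecidableEq ι] [CommSemiring R]
    {A : Matrix ι ι R} {x : ι → R} {μ : R} (h : A *ᵥ x = μ • x) (t : ℕ) :
    A ^ t *ᵥ x = μ ^ t • x := by
  induction t with
  | zero => simp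
  | succ t ih => rw [pow_succ, ← mulVec_mulVec, h, mulVec_smul, ih, smul_smul, pow_succ']

theorem one_sub_smul_pow_mulVec_eq_smul {ι : Type*} [Fintype ι] [DecidableEq ι]
    {K : Matrix ι ι ℝ} {x : ι → ℝ} {μ : ℝ} (h : K *ᵥ x = μ • x) (η : ℝ) (t : ℕ) :
    (1 - η • K) ^ t *ᵥ x = (1 - η * μ) ^ t • x :=
  pow_mulVec_eq_smul
    (by rw [sub_mulVec, one_mulVec, smul_mulVec, h, smul_smul, sub_smul, one_smul]) t

theorem PosSemidef.nonneg_of_mulVec_eq_smul {ι : Type*} [Fintype ι] {K : Matrix ι ι ℝ}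
    (hK : K.PosSemidef) {x : ι → ℝ} (hx : x ≠ 0) {μ : ℝ} (h : K *ᵥ x = μ • x) : 0 ≤ μ := by
  have hKx : 0 ≤ x ⬝ᵥ K *ᵥ x := hK.dotProduct_mulVec_nonneg x
  rw [h, dotProduct_smul, smul_eq_mul] at hKx
  exact nonneg_of_mul_nonneg_left hKx (dotProduct_star_self_pos_iff.mpr hx)

section Orthonormal

variable {ι : Type*} [Fintype ι] [DecidableEq ι] {v : ι → ι → ℝ}
  (hv : ∀ i j, v i ⬝ᵥ v j = if i = j then 1 else 0)
include hv

theorem of_mul_transpose_eq_one : of v * (of v)ᵀ = 1 := by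
  ext i j
  rw [mul_apply', one_apply, ← hv]
  rfl

theorem transpose_mul_of_eq_one : (of v)ᵀ * of v = 1 :=
  mul_eq_one_comm.mp (of_mul_transpose_eq_one hv)

theorem sum_sq_dotProduct_eq_dotProduct_self (x : ι → ℝ) :
    ∑ i, (v i ⬝ᵥ x) ^ 2 = x ⬝ᵥ x :=
  calc ∑ i, (v i ⬝ᵥ x) ^ 2 = of v *ᵥ x ⬝ᵥ of v *ᵥ x := by simp only [sq]; rfl
    _ = x ⬝ᵥ x := by
      rw [dotProduct_mulVec, vecMul_mulVec, transpose_mul_of_eq_one hv, vecMul_one]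

theorem trace_eq_sum_dotProduct_mulVec (B : Matrix ι ι ℝ) :
    B.trace = ∑ i, v i ⬝ᵥ B *ᵥ v i :=
  calc B.trace = (of v * B * (of v)ᵀ).trace := by
        rw [trace_mul_cycle, transpose_mul_of_eq_one hv, one_mul]
    _ = ∑ i, v i ⬝ᵥ B *ᵥ v i := by
      refine Finset.sum_congr rfl fun i _ => ?_
      rw [dotProduct_mulVec]
      rfl

theorem trace_eq_sum_of_mulVec_eq_smul {B : Matrix ι ι ℝ} {β : ι → ℝ}
    (h : ∀ i, B *ᵥ v i = β i • v i) : B.trace = ∑ i, β i := by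
  simp only [trace_eq_sum_dotProduct_mulVec hv, h, dotProduct_smul, hv, if_true, smul_eq_mul,
    mul_one]

theorem mulVec_dotProduct_mulVec_eq_sum {B : Matrix ι ι ℝ} (hB : B.IsSymm) {β : ι → ℝ}
    (h : ∀ i, B *ᵥ v i = β i • v i) (x : ι → ℝ) :
    B *ᵥ x ⬝ᵥ B *ᵥ x = ∑ i, β i ^ 2 * (v i ⬝ᵥ x) ^ 2 := by
  simp only [← sum_sq_dotProduct_eq_dotProduct_self hv, dotProduct_mulVec_of_isSymm hB (h _),
    mul_pow]

variable {K : Matrix ι ι ℝ} {lam : ι → ℝ} (heig : ∀ i, K *ᵥ v i = lam i • v i)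
include heig

theorem trace_one_sub_smul_pow_mul_eq_sum (η : ℝ) (t : ℕ) :
    ((1 - η • K) ^ t * K).trace = ∑ i, (1 - η * lam i) ^ t * lam i :=
  trace_eq_sum_of_mulVec_eq_smul hv fun i => by
    rw [← mulVec_mulVec, heig, mulVec_smul, one_sub_smul_pow_mulVec_eq_smul (heig i), smul_smul,
      mul_comm]

theorem one_sub_smul_pow_mulVec_dotProduct_self_eq_sum (hK : K.IsSymm) (η : ℝ) (t : ℕ)
    (x : ι → ℝ) :
    (1 - η • K) ^ t *ᵥ x ⬝ᵥ (1 - η • K) ^ t *ᵥ x =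
      ∑ i, (1 - η * lam i) ^ (2 * t) * (v i ⬝ᵥ x) ^ 2 := by
  rw [mulVec_dotProduct_mulVec_eq_sum hv ((isSymm_one.sub (hK.smul η)).pow t)
    (fun i => one_sub_smul_pow_mulVec_eq_smul (heig i) η t)]
  simp only [← pow_mul, mul_comm t 2]

end Orthonormal

end Matrix

theorem abs_le_l2OpNorm_of_mulVec_eq_smul {n : ℕ} {A : Matrix (Fin n) (Fin n) ℝ}
    {x : Fin n → ℝ} (hx : x ≠ 0) {μ : ℝ} (h : A *ᵥ x = μ • x) : |μ| ≤ l2OpNorm A := by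
  set w : EuclideanSpace ℝ (Fin n) := WithLp.toLp 2 x
  have hw : 0 < ‖w‖ := norm_pos_iff.mpr (by simpa [w] using hx)
  have hAw : LinearMap.toContinuousLinearMap (toEuclideanLin A) w = μ • w := by
    simp [w, h]
  have hle := (LinearMap.toContinuousLinearMap (toEuclideanLin A)).le_opNorm w
  rw [hAw, norm_smul, Real.norm_eq_abs] at hle
  exact le_of_mul_le_mul_right hle hw

theorem abs_one_sub_mul_le_one {n : ℕ} {K : Matrix (Fin n) (Fin n) ℝ} (hK : K.PosSemidef)
    {x : Fin n → ℝ} (hx : x ≠ 0) {μ η : ℝ} (h : K *ᵥ x = μ • x) (hη : 0 ≤ η)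
    (hηK : η * l2OpNorm K ≤ 1) : |1 - η * μ| ≤ 1 := by
  have hμ0 : 0 ≤ η * μ := mul_nonneg hη (hK.nonneg_of_mulVec_eq_smul hx h)
  have hμK : η * μ ≤ 1 :=
    (mul_le_mul_of_nonneg_left ((le_abs_self μ).trans (abs_le_l2OpNorm_of_mulVec_eq_smul hx h))
      hη).trans hηK
  rw [abs_le]
  constructor <;> linarith

theorem enorm_sq {n : ℕ} (x : Fin n → ℝ) : _root_.enorm x ^ 2 = x ⬝ᵥ x := by
  rw [_root_.enorm, Real.sq_sqrt (Finset.sum_nonneg fun i _ => sq_nonneg (x i))]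
  simp only [dotProduct, sq]

theorem abs_dotProduct_le_enorm_mul_enorm {n : ℕ} (x y : Fin n → ℝ) :
    |x ⬝ᵥ y| ≤ _root_.enorm x * _root_.enorm y := by
  rw [_root_.enorm, _root_.enorm, ← Real.sqrt_mul (Finset.sum_nonneg fun i _ => sq_nonneg (x i))]
  exact Real.abs_le_sqrt (Finset.sum_mul_sq_le_sq_mul_sq _ _ _)

theorem mul_add_sq_div_two_le_half {s d L ε : ℝ} (hL : 1 ≤ L) (hε : ε ≤ 1) (hs0 : 0 ≤ s)
    (hs : s ^ 2 ≤ 2 * L) (hd0 : 0 ≤ d) (hd : d ≤ ε / (4 * √L)) :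
    s * d + d ^ 2 / 2 ≤ ε / 2 := by
  have hq : 1 ≤ √L := Real.one_le_sqrt.mpr hL
  have hqL : √L ^ 2 = L := Real.sq_sqrt (by linarith)
  have hqd : 4 * √L * d ≤ ε := by rwa [le_div_iff₀ (by positivity), mul_comm] at hd
  have hd' : d ≤ ε / 4 := by nlinarith
  have hsd_sq : (s * d) ^ 2 ≤ (3 / 8 * ε) ^ 2 :=
    calc (s * d) ^ 2 = s ^ 2 * d ^ 2 := mul_pow s d 2
      _ ≤ (2 * √L ^ 2) * d ^ 2 := by rw [hqL]; gcongr
      _ = (4 * √L * d) ^ 2 / 8 := by ring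
      _ ≤ ε ^ 2 / 8 := by gcongr
      _ ≤ (3 / 8 * ε) ^ 2 := by nlinarith
  have hsd : s * d ≤ 3 / 8 * ε := by nlinarith
  nlinarith

theorem abs_half_dotProduct_add_self_sub_le {n : ℕ} {m d : Fin n → ℝ} {L ε : ℝ} (hL : 1 ≤ L)
    (hε : ε ≤ 1) (hm : m ⬝ᵥ m ≤ 2 * L) (hd : _root_.enorm d ≤ ε / (4 * √L)) :
    |1 / 2 * ((m + d) ⬝ᵥ (m + d)) - 1 / 2 * (m ⬝ᵥ m)| ≤ ε / 2 := by
  have hexpand : 1 / 2 * ((m + d) ⬝ᵥ (m + d)) - 1 / 2 * (m ⬝ᵥ m) =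
      m ⬝ᵥ d + _root_.enorm d ^ 2 / 2 := by
    rw [enorm_sq, add_dotProduct, dotProduct_add, dotProduct_add, dotProduct_comm d m]
    ring
  rw [hexpand]
  calc |m ⬝ᵥ d + _root_.enorm d ^ 2 / 2| ≤ |m ⬝ᵥ d| + |_root_.enorm d ^ 2 / 2| := abs_add_le _ _
    _ = |m ⬝ᵥ d| + _root_.enorm d ^ 2 / 2 := by
      rw [abs_of_nonneg (a := _root_.enorm d ^ 2 / 2) (by positivity)]
    _ ≤ _root_.enorm m * _root_.enorm d + _root_.enorm d ^ 2 / 2 := by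
      gcongr; exact abs_dotProduct_le_enorm_mul_enorm m d
    _ ≤ ε / 2 :=
      mul_add_sq_div_two_le_half hL hε (Real.sqrt_nonneg _) (by rwa [enorm_sq])
        (Real.sqrt_nonneg _) hd

theorem improved_convergence_bound_general (n : ℕ)
    (K : Matrix (Fin n) (Fin n) ℝ) (hK : K.PosSemidef)
    (lam : Fin n → ℝ) (v : Fin n → Fin n → ℝ)
    (hortho : ∀ i j, v i ⬝ᵥ v j = if i = j then (1 : ℝ) else 0)
    (heig : ∀ i, K.mulVec (v i) = lam i • v i)
    (r₀ : Fin n → ℝ) (L₀ : ℝ) (hL₀def : L₀ = (1 / 2) * (r₀ ⬝ᵥ r₀)) (hL₀ : 1 ≤ L₀)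
    (c δ : ℝ)
    (halign : ∀ i, (c - δ) * lam i ≤ (v i ⬝ᵥ r₀) ^ 2 ∧
      (v i ⬝ᵥ r₀) ^ 2 ≤ (c + δ) * lam i)
    (ε η : ℝ) (hε : ε ∈ Set.Ioo (0 : ℝ) 1) (hη : 0 < η)
    (hηK : η * l2OpNorm K ≤ 1)
    (r Δ : ℕ → Fin n → ℝ)
    (hr : ∀ t : ℕ, r t = ((1 - η • K) ^ t).mulVec r₀ + Δ t)
    (hΔ : ∀ t : ℕ, _root_.enorm (Δ t) ≤ ε / (4 * Real.sqrt L₀)) :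
    ∀ t : ℕ,
      (c - δ) / 2 * ((1 - η • K) ^ (2 * t) * K).trace - ε / 2 ≤
        (1 / 2) * (r t ⬝ᵥ r t) ∧
      (1 / 2) * (r t ⬝ᵥ r t) ≤
        (c + δ) / 2 * ((1 - η • K) ^ (2 * t) * K).trace + ε / 2 := by
  intro t
  have hv0 : ∀ i, v i ≠ 0 := fun i h0 => by simpa [h0] using hortho i i
  set w : Fin n → ℝ := fun i => (1 - η * lam i) ^ (2 * t)
  have hw : ∀ i, 0 ≤ w i ∧ w i ≤ 1 := fun i =>
    ⟨(even_two_mul t).pow_nonneg _, ((even_two_mul t).pow_abs _).symm.trans_le <|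
      pow_le_one₀ (abs_nonneg _) (abs_one_sub_mul_le_one hK (hv0 i) (heig i) hη.le hηK)⟩
  have hnorm : (1 - η • K) ^ t *ᵥ r₀ ⬝ᵥ (1 - η • K) ^ t *ᵥ r₀ = ∑ i, w i * (v i ⬝ᵥ r₀) ^ 2 :=
    one_sub_smul_pow_mulVec_dotProduct_self_eq_sum hortho heig
      (isHermitian_iff_isSymm.mp hK.1) η t r₀
  have hlower : (c - δ) * ∑ i, w i * lam i ≤ ∑ i, w i * (v i ⬝ᵥ r₀) ^ 2 := by
    rw [Finset.mul_sum]
    exact Finset.sum_le_sum fun i _ => by nlinarith [hw i, halign i]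
  have hupper : ∑ i, w i * (v i ⬝ᵥ r₀) ^ 2 ≤ (c + δ) * ∑ i, w i * lam i := by
    rw [Finset.mul_sum]
    exact Finset.sum_le_sum fun i _ => by nlinarith [hw i, halign i]
  have hbounded : ∑ i, w i * (v i ⬝ᵥ r₀) ^ 2 ≤ 2 * L₀ :=
    calc ∑ i, w i * (v i ⬝ᵥ r₀) ^ 2 ≤ ∑ i, (v i ⬝ᵥ r₀) ^ 2 :=
          Finset.sum_le_sum fun i _ => mul_le_of_le_one_left (sq_nonneg _) (hw i).2
      _ = 2 * L₀ := by rw [sum_sq_dotProduct_eq_dotProduct_self hortho, hL₀def]; ring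
  have hperturb := abs_le.mp
    (abs_half_dotProduct_add_self_sub_le hL₀ hε.2.le (hnorm ▸ hbounded) (hΔ t))
  rw [hr t, trace_one_sub_smul_pow_mul_eq_sum hortho heig]
  constructor <;> linarith [hperturb.1, hperturb.2]

/-- **Theorem 4.3** (improved convergence bound), with the NTK-regime
linearization `r_t = (I - ηK)^t r₀ + Δ_t`, `‖Δ_t‖ ≤ ε/(4√L₀)` taken as a
hypothesis. -/
theorem improved_convergence_bound (n : ℕ)
    (K : Matrix (Fin n) (Fin n) ℝ) (hK : K.PosSemidef)
    (lam : Fin n → ℝ) (v : Fin n → Fin n → ℝ)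
    (hortho : ∀ i j, v i ⬝ᵥ v j = if i = j then (1 : ℝ) else 0)
    (heig : ∀ i, K.mulVec (v i) = lam i • v i)
    (r₀ : Fin n → ℝ) (L₀ : ℝ) (hL₀def : L₀ = (1 / 2) * (r₀ ⬝ᵥ r₀)) (hL₀ : 1 ≤ L₀)
    (c δ : ℝ) (hδ : 0 < δ) (hδc : δ < c)
    (halign : ∀ i, (c - δ) * lam i ≤ (v i ⬝ᵥ r₀) ^ 2 ∧
      (v i ⬝ᵥ r₀) ^ 2 ≤ (c + δ) * lam i)
    (ε η : ℝ) (hε : ε ∈ Set.Ioo (0 : ℝ) 1) (hη : 0 < η)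
    (hηK : η * l2OpNorm K ≤ 1)
    (r Δ : ℕ → Fin n → ℝ)
    (hr : ∀ t : ℕ, r t = ((1 - η • K) ^ t).mulVec r₀ + Δ t)
    (hΔ : ∀ t : ℕ, _root_.enorm (Δ t) ≤ ε / (4 * Real.sqrt L₀)) :
    ∀ t : ℕ,
      (c - δ) / 2 * ((1 - η • K) ^ (2 * t) * K).trace - ε / 2 ≤
        (1 / 2) * (r t ⬝ᵥ r t) ∧
      (1 / 2) * (r t ⬝ᵥ r t) ≤
        (c + δ) / 2 * ((1 - η • K) ^ (2 * t) * K).trace + ε / 2 :=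
  improved_convergence_bound_general n K hK lam v hortho heig r₀ L₀ hL₀def hL₀ c δ halign ε η hε hη
    hηK r Δ hr hΔ
end

section
/- Let n ≥ 1, q > 1, and C₂ ≥ C₁ > 0, and let λ₁ ≥ λ₂ ≥ … ≥ λ_n > 0 satisfy C₁ i^{−q} ≤ λ_i ≤ C₂ i^{−q} for all i ∈ [n]. Let c > δ > 0, ε ∈ (0,1), L₀ ≥ 1 with (c − δ)·Σ_{i=1}^n λ_i ≤ 2L₀, and let η > 0 with ηλ₁ ≤ 1. Suppose a sequence (L_t)_{t≥0} of nonnegative reals satisfies L_t ≤ (c + δ)/2 · Σ_{i=1}^n (1 − ηλ_i)^{2t} λ_i + ε/2 for all t ≥ 0. Define i*_ε := ((q − 1)ε/(2(c + δ)C₂) + n^{1−q})^{1/(1−q)}; then i*_ε ≤ n, and for every integer m with i*_ε ≤ m ≤ n and every integer t ≥ (1/(2ηλ_m)) · log(4(c + δ)L₀ / ((c − δ)ε)), one has L_t ≤ ε. In particular, since λ_m ≥ C₁ m^{−q}, it suffices that t ≥ (m^q/(2ηC₁)) · log(4(c + δ)L₀ / ((c − δ)ε)). -/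
/-!
Split the spectral sum at an index `m`. On the head `i ≤ m` each factor `(1 - ηλᵢ)^{2t}` is at
most `exp (-2tηλ_m)` and the trace bound gives `Σ λᵢ ≤ 2L₀/(c-δ)`, so the head contributes at most
`ε/4` once `2tηλ_m ≥ log (4(c+δ)L₀/((c-δ)ε))`. On the tail the factors are at most `1`, and
comparing `Σ_{m<i≤n} C₂ i^{-q}` with `∫_m^n C₂ x^{-q} dx` shows that the tail contributes at most
`ε/4` exactly when `m ≥ i*_ε`. The second time bound follows from `λ_m ≥ C₁ m^{-q}`.
-/

open Finset Real

theorem sum_Ioc_rpow_neg_le {q : ℝ} (hq : 1 < q) {m n : ℕ} (hm : 1 ≤ m) (hmn : m ≤ n) :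
    ∑ i ∈ Ioc m n, (i : ℝ) ^ (-q) ≤ ((m : ℝ) ^ (1 - q) - (n : ℝ) ^ (1 - q)) / (q - 1) := by
  have hm0 : (0 : ℝ) < m := by exact_mod_cast hm
  have hanti : AntitoneOn (fun x : ℝ => x ^ (-q)) (Set.Icc m n) := fun x hx y _ hxy =>
    rpow_le_rpow_of_nonpos (hm0.trans_le hx.1) hxy (by linarith)
  have hzero : (0 : ℝ) ∉ Set.uIcc (m : ℝ) n := by
    rw [Set.uIcc_of_le (by exact_mod_cast hmn)]
    exact fun h => hm0.not_ge h.1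
  calc ∑ i ∈ Ioc m n, (i : ℝ) ^ (-q) = ∑ i ∈ Ico m n, ((i + 1 : ℕ) : ℝ) ^ (-q) := by
        rw [sum_Ico_add' (fun i : ℕ => (i : ℝ) ^ (-q)), Ico_add_one_add_one_eq_Ioc]
    _ ≤ ∫ x in (m : ℝ)..n, x ^ (-q) := hanti.sum_le_integral_Ico hmn
    _ = ((m : ℝ) ^ (1 - q) - (n : ℝ) ^ (1 - q)) / (q - 1) := by
        rw [integral_rpow (Or.inr ⟨by linarith, hzero⟩), show -q + 1 = 1 - q by ring,
          ← neg_sub q 1, div_neg, ← neg_div, neg_sub]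

theorem sum_Ioc_le_of_le_rpow_neg {lam : ℕ → ℝ} {q C : ℝ} {m n : ℕ} (hq : 1 < q) (hC : 0 ≤ C)
    (hm : 1 ≤ m) (hmn : m ≤ n) (hle : ∀ i ∈ Icc 1 n, lam i ≤ C * (i : ℝ) ^ (-q)) :
    ∑ i ∈ Ioc m n, lam i ≤ C * (((m : ℝ) ^ (1 - q) - (n : ℝ) ^ (1 - q)) / (q - 1)) :=
  calc ∑ i ∈ Ioc m n, lam i ≤ ∑ i ∈ Ioc m n, C * (i : ℝ) ^ (-q) :=
        sum_le_sum fun i hi => hle i (Icc_subset_Icc_left hm (Ioc_subset_Icc_self hi))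
    _ ≤ C * (((m : ℝ) ^ (1 - q) - (n : ℝ) ^ (1 - q)) / (q - 1)) := by
        rw [← mul_sum]; exact mul_le_mul_of_nonneg_left (sum_Ioc_rpow_neg_le hq hm hmn) hC

theorem one_sub_pow_le_exp_neg_mul {x : ℝ} (hx : x ≤ 1) (k : ℕ) :
    (1 - x) ^ k ≤ exp (-(k * x)) :=
  calc (1 - x) ^ k ≤ exp (-x) ^ k := pow_le_pow_left₀ (by linarith) (one_sub_le_exp_neg x) k
    _ = exp (-(k * x)) := by rw [← exp_nat_mul, mul_neg]

theorem exp_neg_le_inv_of_log_le {A s : ℝ} (hA : 0 < A) (h : log A ≤ s) : exp (-s) ≤ A⁻¹ := by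
  rw [← exp_log (inv_pos.2 hA), log_inv]
  exact exp_le_exp.2 (neg_le_neg h)

theorem one_div_mul_le_rpow_div_mul {a C x q y : ℝ} (ha : 0 < a) (hC : 0 < C) (hx : 0 < x)
    (h : C * x ^ (-q) ≤ y) : 1 / (a * y) ≤ x ^ q / (a * C) := by
  rw [rpow_neg hx.le, ← div_eq_mul_inv, div_le_iff₀ (by positivity)] at h
  rw [div_le_div_iff₀ (by nlinarith [rpow_pos_of_pos hx q]) (by positivity)]
  nlinarith

theorem sum_one_sub_pow_mul_le {lam : ℕ → ℝ} {η : ℝ} {m n : ℕ} (k : ℕ) (hη : 0 ≤ η)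
    (hanti : AntitoneOn lam (Set.Icc 1 n)) (hnonneg : ∀ i ∈ Icc 1 n, 0 ≤ lam i)
    (hη₁ : η * lam 1 ≤ 1) (hmn : m ≤ n) :
    ∑ i ∈ Icc 1 n, (1 - η * lam i) ^ k * lam i ≤
      exp (-(k * (η * lam m))) * ∑ i ∈ Icc 1 m, lam i + ∑ i ∈ Ioc m n, lam i := by
  have hstep {i : ℕ} (hi : i ∈ Icc 1 n) : η * lam i ≤ 1 := by
    have h1 : 1 ∈ Set.Icc 1 n := ⟨le_rfl, (mem_Icc.1 hi).1.trans (mem_Icc.1 hi).2⟩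
    nlinarith [hanti h1 (mem_Icc.1 hi) (mem_Icc.1 hi).1]
  have hfactor {i : ℕ} (hi : i ∈ Icc 1 n) : 0 ≤ 1 - η * lam i ∧ 1 - η * lam i ≤ 1 :=
    ⟨by linarith [hstep hi], by nlinarith [hnonneg i hi]⟩
  have head : ∀ i ∈ Icc 1 m, (1 - η * lam i) ^ k * lam i ≤ exp (-(k * (η * lam m))) * lam i := by
    intro i hi
    obtain ⟨hi1, him⟩ := mem_Icc.1 hi
    have hin : i ∈ Icc 1 n := mem_Icc.2 ⟨hi1, him.trans hmn⟩
    have hm : m ∈ Icc 1 n := mem_Icc.2 ⟨hi1.trans him, hmn⟩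
    have hlam : lam m ≤ lam i := hanti (mem_Icc.1 hin) (mem_Icc.1 hm) him
    refine mul_le_mul_of_nonneg_right ?_ (hnonneg i hin)
    calc (1 - η * lam i) ^ k ≤ (1 - η * lam m) ^ k :=
          pow_le_pow_left₀ (hfactor hin).1 (by nlinarith) k
      _ ≤ exp (-(k * (η * lam m))) := one_sub_pow_le_exp_neg_mul (hstep hm) k
  have tail : ∀ i ∈ Ioc m n, (1 - η * lam i) ^ k * lam i ≤ lam i := fun i hi => by
    have hin : i ∈ Icc 1 n := by rw [mem_Ioc] at hi; exact mem_Icc.2 ⟨by omega, hi.2⟩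
    exact mul_le_of_le_one_left (hnonneg i hin) (pow_le_one₀ (hfactor hin).1 (hfactor hin).2)
  have hIcc (j : ℕ) : Icc 1 j = Ioc 0 j := Icc_add_one_left_eq_Ioc 0 j
  rw [hIcc, ← sum_Ioc_consecutive _ (Nat.zero_le m) hmn, ← hIcc, mul_sum]
  exact add_le_add (sum_le_sum head) (sum_le_sum tail)

theorem sum_one_sub_pow_mul_le_of_power_law {lam : ℕ → ℝ} {η q C : ℝ} {m n : ℕ} (k : ℕ)
    (hη : 0 ≤ η) (hq : 1 < q) (hC : 0 ≤ C) (hanti : AntitoneOn lam (Set.Icc 1 n))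
    (hnonneg : ∀ i ∈ Icc 1 n, 0 ≤ lam i) (hη₁ : η * lam 1 ≤ 1)
    (hupper : ∀ i ∈ Icc 1 n, lam i ≤ C * (i : ℝ) ^ (-q)) (hm : 1 ≤ m) (hmn : m ≤ n) :
    ∑ i ∈ Icc 1 n, (1 - η * lam i) ^ k * lam i ≤
      exp (-(k * (η * lam m))) * ∑ i ∈ Icc 1 n, lam i
        + C * (((m : ℝ) ^ (1 - q) - (n : ℝ) ^ (1 - q)) / (q - 1)) := by
  refine (sum_one_sub_pow_mul_le k hη hanti hnonneg hη₁ hmn).trans (add_le_add ?_ ?_)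
  · exact mul_le_mul_of_nonneg_left
      (sum_le_sum_of_subset_of_nonneg (Icc_subset_Icc_right hmn) fun i hi _ => hnonneg i hi)
      (exp_pos _).le
  · exact sum_Ioc_le_of_le_rpow_neg hq hC hm hmn hupper

theorem loss_le_of_log_le {lam : ℕ → ℝ} {n m t : ℕ} {q C₂ c δ ε L₀ η ℓ : ℝ}
    (hq : 1 < q) (hC₂ : 0 < C₂) (hδ : 0 < δ) (hδc : δ < c) (hε : 0 < ε) (hL₀ : 0 < L₀)
    (hη : 0 ≤ η) (hanti : AntitoneOn lam (Set.Icc 1 n)) (hnonneg : ∀ i ∈ Icc 1 n, 0 ≤ lam i)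
    (hη₁ : η * lam 1 ≤ 1) (hupper : ∀ i ∈ Icc 1 n, lam i ≤ C₂ * (i : ℝ) ^ (-q))
    (htr : (c - δ) * ∑ i ∈ Icc 1 n, lam i ≤ 2 * L₀)
    (hℓ : ℓ ≤ (c + δ) / 2 * ∑ i ∈ Icc 1 n, (1 - η * lam i) ^ (2 * t) * lam i + ε / 2)
    (hm : 1 ≤ m) (hmn : m ≤ n)
    (hgap : (m : ℝ) ^ (1 - q) - (n : ℝ) ^ (1 - q) ≤ (q - 1) * ε / (2 * (c + δ) * C₂))
    (ht : log (4 * (c + δ) * L₀ / ((c - δ) * ε)) ≤ (2 * t : ℕ) * (η * lam m)) : ℓ ≤ ε := by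
  set A := 4 * (c + δ) * L₀ / ((c - δ) * ε)
  have hS := sum_one_sub_pow_mul_le_of_power_law (2 * t) hη hq hC₂.le hanti hnonneg hη₁ hupper
    hm hmn
  have hA : 0 < A := div_pos (by nlinarith) (mul_pos (by linarith) hε)
  have hexp := exp_neg_le_inv_of_log_le hA ht
  have htrace : ∑ i ∈ Icc 1 n, lam i ≤ 2 * L₀ / (c - δ) := by
    rw [le_div_iff₀ (by linarith)]
    linarith
  have hcδ : 0 ≤ (c + δ) / 2 := by linarith
  have hq1 : 0 < q - 1 := by linarith
  have hsum : 0 ≤ ∑ i ∈ Icc 1 n, lam i := sum_nonneg hnonneg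
  have hA' : 0 ≤ A⁻¹ := (inv_pos.2 hA).le
  calc ℓ ≤ (c + δ) / 2 * (A⁻¹ * (2 * L₀ / (c - δ))
        + C₂ * ((q - 1) * ε / (2 * (c + δ) * C₂) / (q - 1))) + ε / 2 := by
        grw [hℓ, hS, hexp, htrace, hgap]
    _ = ε := by
        have : c - δ ≠ 0 := by linarith
        have : c + δ ≠ 0 := by linarith
        simp only [A]
        field_simp
        ring

theorem time_complexity_bound_general (n : ℕ) (hn : 1 ≤ n) (q C₁ C₂ c δ ε L₀ η : ℝ)
    (hq : 1 < q) (hC₁ : 0 < C₁)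
    (lam : ℕ → ℝ)
    (hdec : ∀ i j : ℕ, 1 ≤ i → i ≤ j → j ≤ n → lam j ≤ lam i)
    (hpos : ∀ i ∈ Finset.Icc 1 n, 0 < lam i)
    (hpl : ∀ i ∈ Finset.Icc 1 n,
      C₁ * (i : ℝ) ^ (-q) ≤ lam i ∧ lam i ≤ C₂ * (i : ℝ) ^ (-q))
    (hδ : 0 < δ) (hδc : δ < c) (hε : ε ∈ Set.Ioo (0 : ℝ) 1) (hL₀ : 1 ≤ L₀)
    (htr : (c - δ) * ∑ i ∈ Finset.Icc 1 n, lam i ≤ 2 * L₀)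
    (hη : 0 < η) (hηlam1 : η * lam 1 ≤ 1)
    (L : ℕ → ℝ)
    (hLbound : ∀ t : ℕ, L t ≤
      (c + δ) / 2 * ∑ i ∈ Finset.Icc 1 n, (1 - η * lam i) ^ (2 * t) * lam i
        + ε / 2) :
    let istar : ℝ :=
      ((q - 1) * ε / (2 * (c + δ) * C₂) + (n : ℝ) ^ (1 - q)) ^ (1 / (1 - q))
    istar ≤ n ∧
    ∀ m : ℕ, istar ≤ m → m ≤ n →
      (∀ t : ℕ,
        1 / (2 * η * lam m) * Real.log (4 * (c + δ) * L₀ / ((c - δ) * ε)) ≤ t →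
        L t ≤ ε) ∧
      (∀ t : ℕ,
        (m : ℝ) ^ q / (2 * η * C₁) * Real.log (4 * (c + δ) * L₀ / ((c - δ) * ε)) ≤ t →
        L t ≤ ε) := by
  intro istar
  obtain ⟨hε0, hε1⟩ := hε
  have h1n : 1 ∈ Icc 1 n := mem_Icc.2 ⟨le_rfl, hn⟩
  have hC₂ : 0 < C₂ := by simpa using (hpos 1 h1n).trans_le (hpl 1 h1n).2
  set B := (q - 1) * ε / (2 * (c + δ) * C₂)
  have hB : 0 < B := div_pos (by nlinarith) (by nlinarith)
  have istar_le_iff {x : ℝ} (hx : 0 < x) : istar ≤ x ↔ x ^ (1 - q) ≤ B + (n : ℝ) ^ (1 - q) := by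
    show (B + (n : ℝ) ^ (1 - q)) ^ (1 / (1 - q)) ≤ x ↔ _
    rw [one_div]
    exact rpow_inv_le_iff_of_neg (by positivity) hx (by linarith)
  refine ⟨(istar_le_iff (by exact_mod_cast hn)).2 (by linarith), fun m hm hmn => ?_⟩
  have hm1 : 1 ≤ m := Nat.one_le_iff_ne_zero.2 fun h => by
    subst h
    exact (show 0 < istar by positivity).not_ge (by simpa using hm)
  have hlam_m : 0 < lam m := hpos m (mem_Icc.2 ⟨hm1, hmn⟩)
  have decay (t : ℕ) (ht : 1 / (2 * η * lam m) * log (4 * (c + δ) * L₀ / ((c - δ) * ε)) ≤ t) :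
      L t ≤ ε := by
    refine loss_le_of_log_le hq hC₂ hδ hδc hε0 (by linarith) hη.le
      (fun i hi j hj hij => hdec i j hi.1 hij hj.2) (fun i hi => (hpos i hi).le) hηlam1
      (fun i hi => (hpl i hi).2) htr (hLbound t) hm1 hmn
      (by linarith [(istar_le_iff (by positivity)).1 hm]) ?_
    rw [one_div_mul_eq_div, div_le_iff₀ (by positivity)] at ht
    push_cast
    linarith
  have hA : 1 < 4 * (c + δ) * L₀ / ((c - δ) * ε) := by
    rw [lt_div_iff₀ (by nlinarith)]
    nlinarith
  have hcoef : 1 / (2 * η * lam m) ≤ (m : ℝ) ^ q / (2 * η * C₁) :=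
    one_div_mul_le_rpow_div_mul (by positivity) hC₁ (by positivity)
      (hpl m (mem_Icc.2 ⟨hm1, hmn⟩)).1
  exact ⟨decay, fun t ht => decay t ((mul_le_mul_of_nonneg_right hcoef (log_pos hA).le).trans ht)⟩

/-- **Theorem 4.6** (time complexity): under the eigenvalue power-law decay
`C₁ i^{-q} ≤ λ_i ≤ C₂ i^{-q}`, the trace bound `(c-δ)Σλᵢ ≤ 2L₀` and the
convergence bound `L_t ≤ (c+δ)/2 · Σᵢ (1-ηλᵢ)^{2t} λᵢ + ε/2`, the loss drops
below `ε` within the stated number of iterations. -/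
theorem time_complexity_bound (n : ℕ) (hn : 1 ≤ n) (q C₁ C₂ c δ ε L₀ η : ℝ)
    (hq : 1 < q) (hC₁ : 0 < C₁) (hC₁C₂ : C₁ ≤ C₂)
    (lam : ℕ → ℝ)
    (hdec : ∀ i j : ℕ, 1 ≤ i → i ≤ j → j ≤ n → lam j ≤ lam i)
    (hpos : ∀ i ∈ Finset.Icc 1 n, 0 < lam i)
    (hpl : ∀ i ∈ Finset.Icc 1 n,
      C₁ * (i : ℝ) ^ (-q) ≤ lam i ∧ lam i ≤ C₂ * (i : ℝ) ^ (-q))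
    (hδ : 0 < δ) (hδc : δ < c) (hε : ε ∈ Set.Ioo (0 : ℝ) 1) (hL₀ : 1 ≤ L₀)
    (htr : (c - δ) * ∑ i ∈ Finset.Icc 1 n, lam i ≤ 2 * L₀)
    (hη : 0 < η) (hηlam1 : η * lam 1 ≤ 1)
    (L : ℕ → ℝ) (hLnonneg : ∀ t, 0 ≤ L t)
    (hLbound : ∀ t : ℕ, L t ≤
      (c + δ) / 2 * ∑ i ∈ Finset.Icc 1 n, (1 - η * lam i) ^ (2 * t) * lam i
        + ε / 2) :
    let istar : ℝ :=
      ((q - 1) * ε / (2 * (c + δ) * C₂) + (n : ℝ) ^ (1 - q)) ^ (1 / (1 - q))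
    istar ≤ n ∧
    ∀ m : ℕ, istar ≤ m → m ≤ n →
      (∀ t : ℕ,
        1 / (2 * η * lam m) * Real.log (4 * (c + δ) * L₀ / ((c - δ) * ε)) ≤ t →
        L t ≤ ε) ∧
      (∀ t : ℕ,
        (m : ℝ) ^ q / (2 * η * C₁) * Real.log (4 * (c + δ) * L₀ / ((c - δ) * ε)) ≤ t →
        L t ≤ ε) :=
  time_complexity_bound_general n hn q C₁ C₂ c δ ε L₀ η hq hC₁ lam hdec hpos hpl hδ hδc hε hL₀ htr
    hη hηlam1 L hLbound
end
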